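/- Let G be a graph, I ⊆ V(G) an independent set, and consider the two-component unweighted graph G' built from G: component A is a path a_1–a_2–a_3–a_4 where a_1 has n pendant leaves and a_4 has n pendant leaves; component B is obtained from G by subdividing every edge once, attaching n − deg_G(v) pendant leaves to every vertex v, and adding a universal-to-V vertex b with λ = Θ(n³) additional pendant leaves. If |I| ≥ k, then the competitive diffusion game with k+3 players on G' (all weights 1) has a pure Nash equilibrium: k players on k distinct vertices of I, one on b, and two on a_2 and a_3. -/

import Mathlib

open Classical

noncomputable section

/-- State labels in the competitive diffusion game:
`none` = free (undominated, non-neutral), `some none` = neutral,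
`some (some i)` = dominated by player `i`. -/
def initLabel {V : Type*} {k : ℕ} (s : Fin k → V) (v : V) : Option (Option (Fin k)) :=
  if h : ∃! i, s i = v then some (some h.choose)
  else if _h : (∃ i, s i = v) then some none
  else none

/-- One diffusion step: a free vertex adjacent to vertices dominated by exactly one
player becomes dominated by that player; if adjacent to vertices dominated by two or
more players it becomes neutral. -/
def stepLabel {V : Type*} {k : ℕ} (G : SimpleGraph V) (L : V → Option (Option (Fin k)))
    (v : V) : Option (Option (Fin k)) :=
  match L v with
  | some x => some x
  | none =>
    if h : ∃! i : Fin k, ∃ u, G.Adj u v ∧ L u = some (some i) then some (some h.choose)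
    else if _h : (∃ i : Fin k, ∃ u, G.Adj u v ∧ L u = some (some i)) then some none
    else none

/-- The final state of the diffusion process (it stabilizes after `|V|` steps). -/
def finalLabel {V : Type*} [Fintype V] {k : ℕ} (G : SimpleGraph V) (s : Fin k → V) :
    V → Option (Option (Fin k)) :=
  (fun L v => stepLabel G L v)^[Fintype.card V] (initLabel s)

/-- The utility of player `i`: total weight of the vertices `i` dominates at the end. -/
def utility {V : Type*} [Fintype V] {k : ℕ} (G : SimpleGraph V) (w : V → ℤ)
    (s : Fin k → V) (i : Fin k) : ℤ :=
  ∑ v ∈ Finset.univ.filter (fun v => finalLabel G s v = some (some i)), w v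

/-- `s` is a pure Nash equilibrium of the competitive diffusion game `(k, G, w)`. -/
def isNash {V : Type*} [Fintype V] [DecidableEq V] {k : ℕ} (G : SimpleGraph V) (w : V → ℤ)
    (s : Fin k → V) : Prop :=
  ∀ (i : Fin k) (v' : V), utility G w (Function.update s i v') i ≤ utility G w s i

/-- `G` with weights `w` admits `κ` players with boundary `t`: some pure Nash
equilibrium `s` of `(κ, G, w)` satisfies `ν(s) ≤ t ≤ μ(s)`. -/
def admitsWith {V : Type*} [Fintype V] [DecidableEq V] (G : SimpleGraph V) (w : V → ℤ)
    (κ : ℕ) (t : ℤ) : Prop :=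
  ∃ s : Fin κ → V, isNash G w s ∧
    (∀ v : V, utility G w (Fin.snoc s v) (Fin.last κ) ≤ t) ∧
    (∀ i : Fin κ, t ≤ utility G w s i)

/-- The path on `n` vertices. -/
def pathGraph (n : ℕ) : SimpleGraph (Fin n) :=
  SimpleGraph.fromRel (fun i j => (i : ℕ) + 1 = (j : ℕ))

/-- The unweighted path on `n` vertices admits `κ` players with boundary `t`. -/
def pathAdmits (n κ t : ℕ) : Prop :=
  admitsWith (pathGraph n) (fun _ => (1 : ℤ)) κ (t : ℤ)

/-- Vertices of the unweighted graph `G'` built from `G` on `Fin n`: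
component `A` = the 4-path plus `n` pendant leaves on `a_1` and `n` on `a_4`;
component `B` = the original vertices, one subdivision vertex per edge of `G`,
`n − deg(v)` pendant leaves on each vertex `v`, the vertex `b`, and `n³` pendant
leaves on `b`. -/
abbrev VGp (n : ℕ) (G : SimpleGraph (Fin n)) [DecidableRel G.Adj] :=
  (Fin 4 ⊕ (Fin n ⊕ Fin n)) ⊕
    (Fin n ⊕ (G.edgeSet ⊕ ((Σ v : Fin n, Fin (n - G.degree v)) ⊕ (Unit ⊕ Fin (n ^ 3)))))

/-- Generating relation for `G'`. -/
def relGp (n : ℕ) (G : SimpleGraph (Fin n)) [DecidableRel G.Adj] :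
    VGp n G → VGp n G → Prop := fun x y =>
  match x, y with
  -- the path a₁a₂a₃a₄:
  | Sum.inl (Sum.inl i), Sum.inl (Sum.inl i') => (i : ℕ) + 1 = (i' : ℕ)
  -- n pendant leaves on a₁:
  | Sum.inl (Sum.inl i), Sum.inl (Sum.inr (Sum.inl _)) => (i : ℕ) = 0
  -- n pendant leaves on a₄:
  | Sum.inl (Sum.inl i), Sum.inl (Sum.inr (Sum.inr _)) => (i : ℕ) = 3
  -- each edge e of G is subdivided by the vertex b_e:
  | Sum.inr (Sum.inl v), Sum.inr (Sum.inr (Sum.inl e)) => v ∈ (e : Sym2 (Fin n))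
  -- n − deg(v) pendant leaves on each v ∈ V:
  | Sum.inr (Sum.inl v), Sum.inr (Sum.inr (Sum.inr (Sum.inl ⟨v', _⟩))) => v = v'
  -- b is adjacent to every v ∈ V:
  | Sum.inr (Sum.inl _), Sum.inr (Sum.inr (Sum.inr (Sum.inr (Sum.inl _)))) => True
  -- n³ pendant leaves on b:
  | Sum.inr (Sum.inr (Sum.inr (Sum.inr (Sum.inl _)))),
      Sum.inr (Sum.inr (Sum.inr (Sum.inr (Sum.inr _)))) => True
  | _, _ => False

/-- The unweighted graph `G'` of the W[1]-hardness construction. -/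
def Gp (n : ℕ) (G : SimpleGraph (Fin n)) [DecidableRel G.Adj] : SimpleGraph (VGp n G) :=
  SimpleGraph.fromRel (relGp n G)

/-- The standard profile on `G'`: the first `k` players on the original vertices
`f 0, …, f (k−1)`, one player on `b`, and two players on `a_2` and `a_3`. -/
def profGp (n : ℕ) (G : SimpleGraph (Fin n)) [DecidableRel G.Adj] (k : ℕ)
    (f : Fin k → Fin n) : Fin (k + 3) → VGp n G := fun i =>
  if h : (i : ℕ) < k then Sum.inr (Sum.inl (f ⟨i, h⟩))
  else if (i : ℕ) = k then Sum.inr (Sum.inr (Sum.inr (Sum.inr (Sum.inl ()))))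
  else if (i : ℕ) = k + 1 then Sum.inl (Sum.inl (1 : Fin 4))
  else Sum.inl (Sum.inl (2 : Fin 4))

/-!
A player can never cross a *barrier*, a vertex that after the first round is neutral or held by
a rival, so its territory lies in any region around its seed whose boundary consists of barriers.
This bounds every deviation from above; the equilibrium payoffs are bounded from below by
following the first two rounds.

In the profile every player gets at least `n + 1` vertices: a player on `v ∈ I` keeps `v`, its
pendant leaves and its subdivision vertices (uncontested because `I` is independent), the players
on `a₂` and `a₃` take `a₁`, resp. `a₄`, with their leaves, and the player on `b` takes its `n³`
leaves. A deviator other than the `b`-player is fenced in by barriers at `a₂`, `a₃`, `b` and the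
original vertices (each one seeded, vacated next to a rival, or next to `b`), so it gets at most
a star of `n + 1` vertices; the same holds for the `b`-player moving into component `A`. If
`k > 0`, the `b`-player moving elsewhere in `B` finds the vacated `b` a barrier (it is next to a
player on `I`), so it gets a single leaf or at most the `n + n² ≤ n³ + 1` vertices built from `G`;
if `k = 0` it already owns the whole component `B`.
-/

open Function Finset

lemma card_insert_image_univ {α β : Type*} [Fintype α] [DecidableEq β] {g : α → β}
    (hg : Injective g) {c : β} (hc : ∀ x, g x ≠ c) :
    #(insert c (univ.image g)) = Fintype.card α + 1 := by
  rw [card_insert_of_notMem (by simpa using hc), card_image_of_injective _ hg, card_univ]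

section Diffusion

variable {V : Type*} {k : ℕ}

lemma initLabel_eq_some_some_iff {s : Fin k → V} {v : V} {i : Fin k} :
    initLabel s v = some (some i) ↔ s i = v ∧ ∀ j, s j = v → j = i := by
  constructor
  · intro h
    unfold initLabel at h
    split_ifs at h with h₁ <;> simp only [Option.some.injEq, reduceCtorEq] at h
    subst h
    exact ⟨h₁.choose_spec.1, fun j hj => h₁.unique hj h₁.choose_spec.1⟩
  · rintro ⟨hi, huniq⟩
    have h₁ : ∃! j, s j = v := ⟨i, hi, huniq⟩
    rw [initLabel, dif_pos h₁, huniq _ h₁.choose_spec.1]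

lemma initLabel_apply {s : Fin k → V} (hs : Injective s) (i : Fin k) :
    initLabel s (s i) = some (some i) :=
  initLabel_eq_some_some_iff.2 ⟨rfl, fun _ h => hs h⟩

lemma initLabel_eq_none {s : Fin k → V} {v : V} (hv : v ∉ Set.range s) :
    initLabel s v = none := by
  rw [initLabel, dif_neg fun ⟨i, hi, _⟩ => hv ⟨i, hi⟩, dif_neg fun ⟨i, hi⟩ => hv ⟨i, hi⟩]

variable {G : SimpleGraph V} {L : V → Option (Option (Fin k))} {u v : V} {i : Fin k}

lemma stepLabel_of_eq_some {x : Option (Fin k)} (h : L v = some x) : stepLabel G L v = some x := by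
  rw [stepLabel, h]

lemma stepLabel_eq_some_some (h : stepLabel G L v = some (some i)) :
    L v = some (some i) ∨ L v = none ∧ ∃ u, G.Adj u v ∧ L u = some (some i) := by
  unfold stepLabel at h
  split at h
  · exact Or.inl (by simp_all)
  · split_ifs at h with h₁ <;> simp only [Option.some.injEq, reduceCtorEq] at h
    subst h
    exact Or.inr ⟨‹_›, h₁.choose_spec.1⟩

lemma stepLabel_of_adj (h₀ : L v = none) (hadj : G.Adj u v) {p : Fin k}
    (hu : L u = some (some p)) :
    stepLabel G L v = some (some p) ∨ stepLabel G L v = some none := by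
  have hex : ∃ j : Fin k, ∃ u, G.Adj u v ∧ L u = some (some j) := ⟨p, u, hadj, hu⟩
  rw [stepLabel, h₀]
  by_cases h₁ : ∃! j : Fin k, ∃ u, G.Adj u v ∧ L u = some (some j)
  · rw [dif_pos h₁, h₁.unique h₁.choose_spec.1 ⟨u, hadj, hu⟩]
    exact Or.inl rfl
  · rw [dif_neg h₁, dif_pos hex]
    exact Or.inr rfl

lemma stepLabel_eq_of_unique (h₀ : L v = none) (hadj : G.Adj u v) (hu : L u = some (some i))
    (huniq : ∀ j u', G.Adj u' v → L u' = some (some j) → j = i) :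
    stepLabel G L v = some (some i) := by
  have h₁ : ∃! j : Fin k, ∃ u, G.Adj u v ∧ L u = some (some j) :=
    ⟨i, ⟨u, hadj, hu⟩, fun j ⟨u', hu', hj⟩ => huniq j u' hu' hj⟩
  obtain ⟨u', hu', hj⟩ := h₁.choose_spec.1
  rw [stepLabel, h₀, dif_pos h₁, huniq _ u' hu' hj]

lemma stepLabel_eq_none (h₀ : L v = none) (h : ∀ u, G.Adj u v → ∀ j, L u ≠ some (some j)) :
    stepLabel G L v = none := by
  rw [stepLabel, h₀, dif_neg fun ⟨j, ⟨u, hu, hj⟩, _⟩ => h u hu j hj,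
    dif_neg fun ⟨j, u, hu, hj⟩ => h u hu j hj]

variable (G) (s : Fin k → V)

def labelAt (t : ℕ) : V → Option (Option (Fin k)) :=
  (fun L v => stepLabel G L v)^[t] (initLabel s)

lemma labelAt_zero : labelAt G s 0 = initLabel s := rfl

lemma labelAt_succ (t : ℕ) (v : V) :
    labelAt G s (t + 1) v = stepLabel G (labelAt G s t) v := by
  rw [labelAt, iterate_succ_apply']
  rfl

variable {G s}

lemma labelAt_of_le {t t' : ℕ} {x : Option (Fin k)} (h : labelAt G s t v = some x)
    (ht : t ≤ t') : labelAt G s t' v = some x := by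
  induction t', ht using Nat.le_induction with
  | base => exact h
  | succ t' _ ih => rw [labelAt_succ]; exact stepLabel_of_eq_some ih

lemma finalLabel_of_labelAt [Fintype V] {t : ℕ} {x : Option (Fin k)}
    (h : labelAt G s t v = some x) (ht : t ≤ Fintype.card V) : finalLabel G s v = some x :=
  labelAt_of_le h ht

lemma labelAt_one_eq_of_unique (hs : Injective s) (hv : v ∉ Set.range s)
    (hadj : G.Adj (s i) v) (huniq : ∀ j, G.Adj (s j) v → j = i) :
    labelAt G s 1 v = some (some i) := by
  rw [labelAt_succ, labelAt_zero]
  refine stepLabel_eq_of_unique (initLabel_eq_none hv) hadj (initLabel_apply hs i) ?_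
  rintro j _ hadj' hj
  exact huniq j ((initLabel_eq_some_some_iff.1 hj).1 ▸ hadj')

lemma labelAt_one_eq_none (hv : v ∉ Set.range s) (h : ∀ j, ¬ G.Adj (s j) v) :
    labelAt G s 1 v = none := by
  rw [labelAt_succ, labelAt_zero]
  refine stepLabel_eq_none (initLabel_eq_none hv) fun u hadj j hj => ?_
  exact h j ((initLabel_eq_some_some_iff.1 hj).1 ▸ hadj)

lemma labelAt_two_eq_of_forall_adj (hv : v ∉ Set.range s) (hu : G.Adj u v)
    (hnbr : ∀ u, G.Adj u v → u ∉ Set.range s ∧ labelAt G s 1 u = some (some i)) :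
    labelAt G s 2 v = some (some i) := by
  rw [labelAt_succ]
  refine stepLabel_eq_of_unique
    (labelAt_one_eq_none hv fun j hj => (hnbr _ hj).1 ⟨j, rfl⟩) hu (hnbr u hu).2 ?_
  intro j u' hu' hj
  rw [(hnbr u' hu').2] at hj
  exact (Option.some_injective _ (Option.some_injective _ hj)).symm

variable (G s)

def IsBarrier (i : Fin k) (v : V) : Prop := ∃ x, labelAt G s 1 v = some x ∧ x ≠ some i

variable {G s}

lemma isBarrier_apply (hs : Injective s) {p : Fin k} (hp : p ≠ i) : IsBarrier G s i (s p) :=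
  ⟨some p, labelAt_of_le (t := 0) (initLabel_apply hs p) zero_le_one, by simpa using hp⟩

lemma isBarrier_of_adj (hs : Injective s) (hv : v ∉ Set.range s) {p : Fin k}
    (hadj : G.Adj (s p) v) (hp : p ≠ i) : IsBarrier G s i v := by
  rw [IsBarrier, labelAt_succ, labelAt_zero]
  rcases stepLabel_of_adj (initLabel_eq_none hv) hadj (initLabel_apply hs p) with h | h
  · exact ⟨_, h, by simpa using hp⟩
  · exact ⟨_, h, by simp⟩

lemma labelAt_mem_of_barrier (S : Set V)
    (hinit : ∀ v, initLabel s v = some (some i) → v ∈ S)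
    (hS : ∀ u ∈ S, ∀ v, G.Adj u v → v ∈ S ∨ IsBarrier G s i v) (t : ℕ) :
    ∀ v, labelAt G s t v = some (some i) → v ∈ S := by
  induction t with
  | zero => exact hinit
  | succ t ih =>
    intro v hv
    rw [labelAt_succ] at hv
    rcases stepLabel_eq_some_some hv with h | ⟨hfree, u, hadj, hu⟩
    · exact ih v h
    refine (hS u (ih u hu) v hadj).resolve_right fun ⟨x, hx, hxi⟩ => ?_
    rcases Nat.eq_zero_or_pos t with rfl | ht
    · rw [labelAt_succ, hv] at hx
      exact hxi (Option.some_injective _ hx).symm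
    · rw [labelAt_of_le hx ht] at hfree
      cases hfree

section Utility

variable [Fintype V]

lemma utility_one_eq_card :
    utility G (fun _ => 1) s i = #{v | finalLabel G s v = some (some i)} := by
  simp [utility]

lemma utility_one_nonneg : 0 ≤ utility G (fun _ => 1) s i := by
  rw [utility_one_eq_card]; positivity

lemma card_le_utility_one (S : Finset V) (hS : ∀ v ∈ S, finalLabel G s v = some (some i)) :
    #S ≤ utility G (fun _ => 1) s i := by
  rw [utility_one_eq_card]
  exact_mod_cast card_le_card fun v hv => mem_filter.2 ⟨mem_univ v, hS v hv⟩

lemma utility_one_le_card_of_barrier (S : Finset V)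
    (hinit : ∀ v, initLabel s v = some (some i) → v ∈ S)
    (hS : ∀ u ∈ S, ∀ v, G.Adj u v → v ∈ S ∨ IsBarrier G s i v) :
    utility G (fun _ => 1) s i ≤ #S := by
  rw [utility_one_eq_card]
  exact_mod_cast card_le_card fun v hv =>
    labelAt_mem_of_barrier (S : Set V) hinit hS _ v (mem_filter.1 hv).2

lemma utility_one_le_card_of_mem (S : Finset V) (hi : s i ∈ S)
    (hS : ∀ u ∈ S, ∀ v, G.Adj u v → v ∈ S ∨ IsBarrier G s i v) :
    utility G (fun _ => 1) s i ≤ #S :=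
  utility_one_le_card_of_barrier S
    (fun _ hv => initLabel_eq_some_some_iff.1 hv |>.1 ▸ hi) hS

lemma utility_one_le_one_of_forall_adj (h : ∀ u, G.Adj u (s i) → IsBarrier G s i u) :
    utility G (fun _ => 1) s i ≤ 1 := by
  refine (utility_one_le_card_of_mem {s i} (mem_singleton_self _) fun u hu v hadj => ?_).trans
    (by simp)
  rw [mem_singleton.1 hu] at hadj
  exact Or.inr (h v hadj.symm)

/-- Moving onto an occupied vertex leaves the mover with nothing. -/
lemma utility_update_le_of_mem_range {v' : V} (hv' : v' ∈ Set.range s) :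
    utility G (fun _ => 1) (update s i v') i ≤ utility G (fun _ => 1) s i := by
  obtain ⟨j, rfl⟩ := hv'
  rcases eq_or_ne j i with rfl | hji
  · rw [update_eq_self]
  have hzero : utility G (fun _ => 1) (update s i (s j)) i = 0 := by
    rw [← Nat.cast_zero, ← card_empty]
    refine le_antisymm (utility_one_le_card_of_barrier ∅ (fun v hv => ?_) (by simp))
      utility_one_nonneg
    obtain ⟨hvi, huniq⟩ := initLabel_eq_some_some_iff.1 hv
    exact absurd (huniq j (by rw [update_of_ne hji, ← hvi, update_self])) hji
  exact hzero ▸ utility_one_nonneg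

end Utility

variable {v' : V}

lemma injective_update_of_notMem_range (hs : Injective s) (hv' : v' ∉ Set.range s) :
    Injective (update s i v') := by
  have hne : ∀ j ≠ i, update s i v' j ≠ update s i v' i := fun j hj h =>
    hv' ⟨j, by rwa [update_of_ne hj, update_self] at h⟩
  intro p q h
  by_cases hp : p = i <;> by_cases hq : q = i
  · rw [hp, hq]
  · exact absurd (hp ▸ h).symm (hne q hq)
  · exact absurd (hq ▸ h) (hne p hp)
  · rw [update_of_ne hp, update_of_ne hq] at h
    exact hs h

lemma isBarrier_update_apply (hs : Injective s) (hv' : v' ∉ Set.range s) {p : Fin k}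
    (hp : p ≠ i) : IsBarrier G (update s i v') i (s p) := by
  have h := isBarrier_apply (G := G) (injective_update_of_notMem_range (i := i) hs hv') hp
  rwa [update_of_ne hp] at h

lemma isBarrier_update_of_adj (hs : Injective s) (hv' : v' ∉ Set.range s) (hv : v ≠ v')
    (hfree : ∀ j ≠ i, s j ≠ v) {q : Fin k} (hq : q ≠ i) (hadj : G.Adj (s q) v) :
    IsBarrier G (update s i v') i v := by
  refine isBarrier_of_adj (injective_update_of_notMem_range hs hv') ?_
    (by rwa [update_of_ne hq]) hq
  rintro ⟨j, hj⟩
  rcases eq_or_ne j i with rfl | hji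
  · exact hv (by rw [← hj, update_self])
  · exact hfree j hji (by rwa [update_of_ne hji] at hj)

end Diffusion

namespace Gp

variable {n : ℕ} {G : SimpleGraph (Fin n)} [DecidableRel G.Adj]

abbrev a₁ : VGp n G := .inl (.inl 0)
abbrev a₂ : VGp n G := .inl (.inl 1)
abbrev a₃ : VGp n G := .inl (.inl 2)
abbrev a₄ : VGp n G := .inl (.inl 3)
abbrev leaf₁ (l : Fin n) : VGp n G := .inl (.inr (.inl l))
abbrev leaf₄ (l : Fin n) : VGp n G := .inl (.inr (.inr l))
abbrev orig (v : Fin n) : VGp n G := .inr (.inl v)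
abbrev sub (e : G.edgeSet) : VGp n G := .inr (.inr (.inl e))
abbrev origLeaf (x : Σ v : Fin n, Fin (n - G.degree v)) : VGp n G := .inr (.inr (.inr (.inl x)))
abbrev b : VGp n G := .inr (.inr (.inr (.inr (.inl ()))))
abbrev bLeaf (l : Fin (n ^ 3)) : VGp n G := .inr (.inr (.inr (.inr (.inr l))))

section Regions

variable {u : VGp n G}

lemma eq_a₂_or_leaf₁_of_adj_a₁ (h : (Gp n G).Adj u a₁) : u = a₂ ∨ ∃ l, u = leaf₁ l := by
  rcases u with (i | _ | _) | _ <;> simp_all [Gp, relGp]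
  exact Fin.ext h.2.symm

lemma eq_a₃_or_leaf₄_of_adj_a₄ (h : (Gp n G).Adj u a₄) : u = a₃ ∨ ∃ l, u = leaf₄ l := by
  rcases u with (i | _ | _) | _ <;> simp_all [Gp, relGp]
  exact Fin.ext (by omega)

lemma eq_a₁_of_adj_leaf₁ {l : Fin n} (h : (Gp n G).Adj u (leaf₁ l)) : u = a₁ := by
  rcases u with (i | _ | _) | _ <;> simp_all [Gp, relGp]

lemma eq_a₄_of_adj_leaf₄ {l : Fin n} (h : (Gp n G).Adj u (leaf₄ l)) : u = a₄ := by
  rcases u with (i | _ | _) | _ <;> simp_all [Gp, relGp]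
  exact Fin.ext h

lemma adj_orig_cases {v : Fin n} (h : (Gp n G).Adj u (orig v)) :
    u = b ∨ (∃ e : G.edgeSet, v ∈ (e : Sym2 (Fin n)) ∧ u = sub e) ∨
      ∃ l, u = origLeaf ⟨v, l⟩ := by
  rcases u with _ | (_ | _ | ⟨w, l⟩ | _ | _) <;> simp_all [Gp, relGp]
  subst v
  exact ⟨l, .rfl⟩

lemma eq_orig_of_adj_sub {e : G.edgeSet} (h : (Gp n G).Adj u (sub e)) :
    ∃ v ∈ (e : Sym2 (Fin n)), u = orig v := by
  rcases u with _ | (_ | _ | _ | _ | _) <;> simp_all [Gp, relGp]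

lemma eq_orig_of_adj_origLeaf {x : Σ v : Fin n, Fin (n - G.degree v)}
    (h : (Gp n G).Adj u (origLeaf x)) : u = orig x.1 := by
  rcases u with _ | (_ | _ | _ | _ | _) <;> rcases x <;> simp_all [Gp, relGp]

lemma eq_b_of_adj_bLeaf {l : Fin (n ^ 3)} (h : (Gp n G).Adj u (bLeaf l)) : u = b := by
  rcases u with _ | (_ | _ | _ | _ | _) <;> simp_all [Gp, relGp]

lemma exists_eq_inr_of_adj {x} (h : (Gp n G).Adj (.inr x) u) : ∃ y, u = .inr y := by
  rcases u with (_ | _ | _) | y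
  all_goals first | exact ⟨y, rfl⟩ | rcases x with _ | _ | _ | _ | _ <;> simp_all [Gp, relGp]

def star₁ : Finset (VGp n G) := insert a₁ (univ.image leaf₁)

def star₄ : Finset (VGp n G) := insert a₄ (univ.image leaf₄)

def starB : Finset (VGp n G) := insert b (univ.image bLeaf)

def origStar (v : Fin n) : Finset (VGp n G) :=
  insert (orig v) ((univ.filter fun e : G.edgeSet => v ∈ (e : Sym2 (Fin n))).image sub ∪
    univ.image fun l => origLeaf ⟨v, l⟩)

def origPart : Finset (VGp n G) := univ.image orig ∪ univ.image sub ∪ univ.image origLeaf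

def compB : Finset (VGp n G) := univ.image .inr

lemma mem_star₁ : u ∈ star₁ ↔ u = a₁ ∨ ∃ l, u = leaf₁ l := by simp [star₁, @eq_comm _ _ u]

lemma mem_star₄ : u ∈ star₄ ↔ u = a₄ ∨ ∃ l, u = leaf₄ l := by simp [star₄, @eq_comm _ _ u]

lemma mem_starB : u ∈ starB ↔ u = b ∨ ∃ l, u = bLeaf l := by simp [starB, @eq_comm _ _ u]

lemma mem_origStar {v : Fin n} : u ∈ origStar v ↔ u = orig v ∨
    (∃ e : G.edgeSet, v ∈ (e : Sym2 (Fin n)) ∧ u = sub e) ∨ ∃ l, u = origLeaf ⟨v, l⟩ := by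
  simp [origStar, @eq_comm _ _ u]

lemma mem_origPart : u ∈ origPart ↔ (∃ v, u = orig v) ∨ (∃ e, u = sub e) ∨ ∃ x, u = origLeaf x := by
  simp [origPart, @eq_comm _ _ u]

lemma inr_mem_compB {x} : (.inr x : VGp n G) ∈ compB := by simp [compB]

lemma inr_mem_origPart_or_mem_starB (x) : (.inr x : VGp n G) ∈ origPart ∨ .inr x ∈ starB := by
  rcases x with _ | _ | _ | ⟨⟩ | _ <;> simp [mem_origPart, mem_starB]

variable {v : VGp n G}

lemma mem_star₁_or_eq_a₂_of_adj (hu : u ∈ star₁) (h : (Gp n G).Adj u v) : v ∈ star₁ ∨ v = a₂ := by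
  rw [mem_star₁] at hu ⊢
  rcases hu with rfl | ⟨l, rfl⟩
  · rcases eq_a₂_or_leaf₁_of_adj_a₁ h.symm with h | h <;> tauto
  · exact Or.inl (Or.inl (eq_a₁_of_adj_leaf₁ h.symm))

lemma mem_star₄_or_eq_a₃_of_adj (hu : u ∈ star₄) (h : (Gp n G).Adj u v) : v ∈ star₄ ∨ v = a₃ := by
  rw [mem_star₄] at hu ⊢
  rcases hu with rfl | ⟨l, rfl⟩
  · rcases eq_a₃_or_leaf₄_of_adj_a₄ h.symm with h | h <;> tauto
  · exact Or.inl (Or.inl (eq_a₄_of_adj_leaf₄ h.symm))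

lemma mem_origStar_or_of_adj {w : Fin n} (hu : u ∈ origStar w) (h : (Gp n G).Adj u v) :
    v ∈ origStar w ∨ v = b ∨ ∃ w' ≠ w, v = orig w' := by
  rw [mem_origStar] at hu ⊢
  rcases hu with rfl | ⟨e, he, rfl⟩ | ⟨l, rfl⟩
  · rcases adj_orig_cases h.symm with h | h | h
    exacts [Or.inr (Or.inl h), Or.inl (Or.inr (Or.inl h)), Or.inl (Or.inr (Or.inr h))]
  · obtain ⟨w', -, rfl⟩ := eq_orig_of_adj_sub h.symm
    rcases eq_or_ne w' w with rfl | hw' <;> tauto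
  · exact Or.inl (Or.inl (eq_orig_of_adj_origLeaf h.symm))

lemma mem_origPart_or_eq_b_of_adj (hu : u ∈ origPart) (h : (Gp n G).Adj u v) :
    v ∈ origPart ∨ v = b := by
  rw [mem_origPart] at hu ⊢
  rcases hu with ⟨w, rfl⟩ | ⟨e, rfl⟩ | ⟨x, rfl⟩
  · rcases adj_orig_cases h.symm with h | ⟨e, -, rfl⟩ | ⟨l, rfl⟩
    exacts [Or.inr h, Or.inl (Or.inr (Or.inl ⟨e, rfl⟩)), Or.inl (Or.inr (Or.inr ⟨_, rfl⟩))]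
  · obtain ⟨w, -, rfl⟩ := eq_orig_of_adj_sub h.symm
    exact Or.inl (Or.inl ⟨w, rfl⟩)
  · exact Or.inl (Or.inl ⟨_, eq_orig_of_adj_origLeaf h.symm⟩)

lemma mem_compB_of_adj (hu : u ∈ compB) (h : (Gp n G).Adj u v) : v ∈ compB := by
  obtain ⟨x, -, rfl⟩ := mem_image.1 hu
  obtain ⟨y, rfl⟩ := exists_eq_inr_of_adj h
  exact inr_mem_compB

lemma card_star₁ : #(star₁ (G := G)) = n + 1 := by
  rw [star₁, card_insert_image_univ (fun _ _ h => by simpa using h) (by simp), Fintype.card_fin]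

lemma card_star₄ : #(star₄ (G := G)) = n + 1 := by
  rw [star₄, card_insert_image_univ (fun _ _ h => by simpa using h) (by simp), Fintype.card_fin]

lemma card_starB : #(starB (G := G)) = n ^ 3 + 1 := by
  rw [starB, card_insert_image_univ (fun _ _ h => by simpa using h) (by simp), Fintype.card_fin]

lemma degree_le (v : Fin n) : G.degree v ≤ n := by
  simpa using (G.degree_lt_card_verts v).le

lemma card_filter_mem_edge_eq_degree (v : Fin n) :
    #(univ.filter fun e : G.edgeSet => v ∈ (e : Sym2 (Fin n))) = G.degree v := by
  rw [← G.card_incidenceSet_eq_degree, ← Fintype.card_subtype]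
  exact Fintype.card_congr ⟨fun e => ⟨e.1.1, e.1.2, e.2⟩, fun e => ⟨⟨e.1, e.2.1⟩, e.2.2⟩,
    fun _ => rfl, fun _ => rfl⟩

lemma card_origStar (v : Fin n) : #(origStar (G := G) v) = n + 1 := by
  rw [origStar, card_insert_of_notMem (by simp), card_union_of_disjoint, 
    card_image_of_injective _ (fun _ _ h => by simpa using h), card_filter_mem_edge_eq_degree,
    card_image_of_injective _ (fun _ _ h => by simpa using h), card_univ, Fintype.card_fin,
    Nat.add_sub_cancel' (degree_le v)]
  simp [disjoint_left]

lemma card_origPart_le : #(origPart (G := G)) ≤ n + n ^ 2 := by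
  have hsum : ∑ v, (n - G.degree v) + 2 * #G.edgeFinset = n * n := by
    rw [← G.sum_degrees_eq_twice_card_edges, ← sum_add_distrib]
    simp [Nat.sub_add_cancel (degree_le _)]
  calc #(origPart (G := G))
      ≤ #(univ.image (orig (G := G))) + #(univ.image (sub (G := G))) +
          #(univ.image (origLeaf (G := G))) :=
        (card_union_le _ _).trans (Nat.add_le_add_right (card_union_le _ _) _)
    _ ≤ n + #G.edgeFinset + ∑ v, (n - G.degree v) := by
        gcongr
        · exact card_image_le.trans (by simp)
        · exact card_image_le.trans (by simp [SimpleGraph.edgeFinset])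
        · exact card_image_le.trans (by simp [Fintype.card_sigma])
    _ ≤ n + n ^ 2 := by nlinarith

end Regions

section Profile

variable {k : ℕ} {f : Fin k → Fin n}

abbrev bPlayer (k : ℕ) : Fin (k + 3) := ⟨k, by omega⟩
abbrev a₂Player (k : ℕ) : Fin (k + 3) := ⟨k + 1, by omega⟩
abbrev a₃Player (k : ℕ) : Fin (k + 3) := ⟨k + 2, by omega⟩

lemma profGp_castAdd (j : Fin k) : profGp n G k f (Fin.castAdd 3 j) = orig (f j) := by
  simp [profGp]

lemma profGp_bPlayer : profGp n G k f (bPlayer k) = b := by simp [profGp]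

lemma profGp_a₂Player : profGp n G k f (a₂Player k) = a₂ := by simp [profGp]

lemma profGp_a₃Player : profGp n G k f (a₃Player k) = a₃ := by simp [profGp]

lemma players_cases (j : Fin (k + 3)) :
    (∃ j', j = Fin.castAdd 3 j') ∨ j = bPlayer k ∨ j = a₂Player k ∨ j = a₃Player k := by
  obtain ⟨j, hj⟩ := j
  by_cases h : j < k
  · exact Or.inl ⟨⟨j, h⟩, rfl⟩
  · simp only [Fin.ext_iff]
    omega

lemma profGp_injective (hf : Injective f) : Injective (profGp n G k f) := by
  intro p q h
  rcases players_cases p with ⟨p, rfl⟩ | rfl | rfl | rfl <;>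
    rcases players_cases q with ⟨q, rfl⟩ | rfl | rfl | rfl <;>
    simp_all [profGp_castAdd, profGp_bPlayer, profGp_a₂Player, profGp_a₃Player, hf.eq_iff,
      Fin.ext_iff]

lemma mem_range_profGp {v : VGp n G} :
    v ∈ Set.range (profGp n G k f) ↔ (∃ j, v = orig (f j)) ∨ v = b ∨ v = a₂ ∨ v = a₃ := by
  constructor
  · rintro ⟨j, rfl⟩
    rcases players_cases j with ⟨j, rfl⟩ | rfl | rfl | rfl <;>
      simp [profGp_castAdd, profGp_bPlayer, profGp_a₂Player, profGp_a₃Player]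
  · rintro (⟨j, rfl⟩ | rfl | rfl | rfl)
    exacts [⟨_, profGp_castAdd j⟩, ⟨_, profGp_bPlayer⟩, ⟨_, profGp_a₂Player⟩,
      ⟨_, profGp_a₃Player⟩]

lemma two_le_card_VGp : 2 ≤ Fintype.card (VGp n G) := by
  simp only [Fintype.card_sum, Fintype.card_fin]
  omega

lemma finalLabel_of_labelAt_le_two {v : VGp n G} {t : ℕ} {x : Option (Fin (k + 3))}
    (h : labelAt (Gp n G) (profGp n G k f) t v = some x) (ht : t ≤ 2) :
    finalLabel (Gp n G) (profGp n G k f) v = some x :=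
  finalLabel_of_labelAt h (ht.trans two_le_card_VGp)

lemma finalLabel_profGp_origStar (hf : Injective f) {I : Finset (Fin n)} (hfI : ∀ j, f j ∈ I)
    (hI : ∀ u ∈ I, ∀ v ∈ I, ¬ G.Adj u v) (j : Fin k) :
    ∀ v ∈ origStar (f j),
      finalLabel (Gp n G) (profGp n G k f) v = some (some (Fin.castAdd 3 j)) := by
  have hs := profGp_injective (G := G) hf
  have hseed : ∀ {j'}, profGp n G k f j' = orig (f j) → j' = Fin.castAdd 3 j :=
    fun h => hs (h.trans (profGp_castAdd j).symm)
  intro v hv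
  rw [mem_origStar] at hv
  rcases hv with rfl | ⟨e, he, rfl⟩ | ⟨l, rfl⟩
  · refine finalLabel_of_labelAt_le_two (t := 0) ?_ (by norm_num)
    rw [labelAt_zero, ← profGp_castAdd]
    exact initLabel_apply hs _
  · refine finalLabel_of_labelAt_le_two (t := 1) (labelAt_one_eq_of_unique hs
      (by rw [mem_range_profGp]; simp) (by simp [profGp_castAdd, Gp, relGp, he]) ?_) (by norm_num)
    intro j' hadj
    obtain ⟨w, hw, hw'⟩ := eq_orig_of_adj_sub hadj
    refine hseed (hw'.trans (congrArg orig ?_))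
    obtain ⟨j'', hj''⟩ : ∃ j'', w = f j'' := by
      have := (mem_range_profGp (G := G) (f := f)).1 ⟨j', rfl⟩
      simpa [hw'] using this
    -- a seeded endpoint lies in `I`, so it cannot be a neighbour of `f j`
    by_contra hne
    have hadj : G.Adj w (f j) := by
      simpa [(Sym2.mem_and_mem_iff hne).1 ⟨hw, he⟩] using e.2
    exact hI w (hj'' ▸ hfI j'') (f j) (hfI j) hadj
  · refine finalLabel_of_labelAt_le_two (t := 1) (labelAt_one_eq_of_unique hs
      (by rw [mem_range_profGp]; simp) (by simp [profGp_castAdd, Gp, relGp]) ?_) (by norm_num)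
    exact fun j' hadj => hseed (eq_orig_of_adj_origLeaf hadj)

lemma finalLabel_profGp_starB (hf : Injective f) :
    ∀ v ∈ starB, finalLabel (Gp n G) (profGp n G k f) v = some (some (bPlayer k)) := by
  have hs := profGp_injective (G := G) hf
  intro v hv
  rw [mem_starB] at hv
  rcases hv with rfl | ⟨l, rfl⟩
  · refine finalLabel_of_labelAt_le_two (t := 0) ?_ (by norm_num)
    rw [labelAt_zero, ← profGp_bPlayer]
    exact initLabel_apply hs _
  · refine finalLabel_of_labelAt_le_two (t := 1) (labelAt_one_eq_of_unique hs
      (by rw [mem_range_profGp]; simp) (by simp [profGp_bPlayer, Gp, relGp]) ?_) (by norm_num)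
    exact fun j hadj => hs ((eq_b_of_adj_bLeaf hadj).trans profGp_bPlayer.symm)

lemma finalLabel_profGp_star₁ (hf : Injective f) :
    ∀ v ∈ star₁, finalLabel (Gp n G) (profGp n G k f) v = some (some (a₂Player k)) := by
  have hs := profGp_injective (G := G) hf
  have ha₁ : labelAt (Gp n G) (profGp n G k f) 1 a₁ = some (some (a₂Player k)) := by
    refine labelAt_one_eq_of_unique hs (by rw [mem_range_profGp]; simp)
      (by simp [profGp_a₂Player, Gp, relGp]) fun j hadj => ?_
    rcases eq_a₂_or_leaf₁_of_adj_a₁ hadj with h | ⟨l, h⟩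
    · exact hs (h.trans profGp_a₂Player.symm)
    · exact absurd (mem_range_profGp.1 ⟨j, h⟩) (by simp)
  intro v hv
  rw [mem_star₁] at hv
  rcases hv with rfl | ⟨l, rfl⟩
  · exact finalLabel_of_labelAt_le_two ha₁ (by norm_num)
  · refine finalLabel_of_labelAt_le_two (labelAt_two_eq_of_forall_adj
      (by rw [mem_range_profGp]; simp) (u := a₁) (by simp [Gp, relGp]) fun u hu => ?_) le_rfl
    rw [eq_a₁_of_adj_leaf₁ hu, mem_range_profGp]
    simpa using ha₁

lemma finalLabel_profGp_star₄ (hf : Injective f) :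
    ∀ v ∈ star₄, finalLabel (Gp n G) (profGp n G k f) v = some (some (a₃Player k)) := by
  have hs := profGp_injective (G := G) hf
  have ha₄ : labelAt (Gp n G) (profGp n G k f) 1 a₄ = some (some (a₃Player k)) := by
    refine labelAt_one_eq_of_unique hs (by rw [mem_range_profGp]; simp)
      (by simp [profGp_a₃Player, Gp, relGp]) fun j hadj => ?_
    rcases eq_a₃_or_leaf₄_of_adj_a₄ hadj with h | ⟨l, h⟩
    · exact hs (h.trans profGp_a₃Player.symm)
    · exact absurd (mem_range_profGp.1 ⟨j, h⟩) (by simp)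
  intro v hv
  rw [mem_star₄] at hv
  rcases hv with rfl | ⟨l, rfl⟩
  · exact finalLabel_of_labelAt_le_two ha₄ (by norm_num)
  · refine finalLabel_of_labelAt_le_two (labelAt_two_eq_of_forall_adj
      (by rw [mem_range_profGp]; simp) (u := a₄) (by simp [Gp, relGp]) fun u hu => ?_) le_rfl
    rw [eq_a₄_of_adj_leaf₄ hu, mem_range_profGp]
    simpa using ha₄

lemma finalLabel_profGp_zero_compB (f : Fin 0 → Fin n) :
    ∀ v ∈ compB, finalLabel (Gp n G) (profGp n G 0 f) v = some (some (bPlayer 0)) := by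
  have hs := profGp_injective (G := G) (f := f) fun j => j.elim0
  have hrange : ∀ {v : VGp n G}, v ∈ Set.range (profGp n G 0 f) ↔ v = b ∨ v = a₂ ∨ v = a₃ := by
    intro v
    rw [mem_range_profGp]
    simp
  have horig : ∀ w, labelAt (Gp n G) (profGp n G 0 f) 1 (orig w) = some (some (bPlayer 0)) := by
    refine fun w => labelAt_one_eq_of_unique hs (by simp [hrange])
      (by rw [profGp_bPlayer]; simp [Gp, relGp]) fun j hadj => hs ?_
    rw [profGp_bPlayer]
    rcases adj_orig_cases hadj with h | ⟨e, -, h⟩ | ⟨l, h⟩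
    · exact h
    all_goals exact absurd (hrange.1 ⟨j, h⟩) (by simp)
  intro v hv
  obtain ⟨x, -, rfl⟩ := mem_image.1 hv
  rcases x with w | e | ⟨w, l⟩ | ⟨⟩ | l
  · exact finalLabel_of_labelAt_le_two (horig w) (by norm_num)
  · refine finalLabel_of_labelAt_le_two (labelAt_two_eq_of_forall_adj (by simp [hrange])
      (u := orig (e : Sym2 (Fin n)).out.1) (by simp [Gp, relGp, Sym2.out_fst_mem])
      fun u hu => ?_) le_rfl
    obtain ⟨w, -, rfl⟩ := eq_orig_of_adj_sub hu
    exact ⟨by simp [hrange], horig w⟩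
  · refine finalLabel_of_labelAt_le_two (labelAt_two_eq_of_forall_adj (by simp [hrange])
      (u := orig w) (by simp [Gp, relGp]) fun u hu => ?_) le_rfl
    rw [eq_orig_of_adj_origLeaf hu]
    exact ⟨by simp [hrange], horig w⟩
  · exact finalLabel_profGp_starB (fun j => j.elim0) _ (mem_starB.2 (Or.inl rfl))
  · exact finalLabel_profGp_starB (fun j => j.elim0) _ (mem_starB.2 (Or.inr ⟨l, rfl⟩))

lemma pow_three_succ_le_utility_bPlayer (hf : Injective f) :
    (n : ℤ) ^ 3 + 1 ≤ utility (Gp n G) (fun _ => 1) (profGp n G k f) (bPlayer k) := by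
  have h := card_le_utility_one _ (finalLabel_profGp_starB (G := G) hf)
  rw [card_starB] at h
  exact_mod_cast h

lemma succ_le_utility_profGp (hf : Injective f) {I : Finset (Fin n)} (hfI : ∀ j, f j ∈ I)
    (hI : ∀ u ∈ I, ∀ v ∈ I, ¬ G.Adj u v) (i : Fin (k + 3)) :
    (n : ℤ) + 1 ≤ utility (Gp n G) (fun _ => 1) (profGp n G k f) i := by
  rcases players_cases i with ⟨j, rfl⟩ | rfl | rfl | rfl
  · have h := card_le_utility_one _ (finalLabel_profGp_origStar hf hfI hI j)
    rw [card_origStar] at h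
    exact_mod_cast h
  · refine le_trans ?_ (pow_three_succ_le_utility_bPlayer hf)
    have : n ≤ n ^ 3 := Nat.le_self_pow (by norm_num) n
    linarith [(Nat.cast_le (α := ℤ)).2 this]
  · have h := card_le_utility_one _ (finalLabel_profGp_star₁ (G := G) hf)
    rw [card_star₁] at h
    exact_mod_cast h
  · have h := card_le_utility_one _ (finalLabel_profGp_star₄ (G := G) hf)
    rw [card_star₄] at h
    exact_mod_cast h

variable {i : Fin (k + 3)} {v' : VGp n G}

lemma isBarrier_a₂ (hf : Injective f) (hv' : v' ∉ Set.range (profGp n G k f)) :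
    IsBarrier (Gp n G) (update (profGp n G k f) i v') i a₂ := by
  have hs := profGp_injective (G := G) hf
  by_cases hi : i = a₂Player k
  · subst hi
    refine isBarrier_update_of_adj hs hv' (fun h => hv' ⟨_, profGp_a₂Player.trans h⟩)
      (fun j hj h => hj (hs (h.trans profGp_a₂Player.symm))) (q := a₃Player k) (by simp)
      (by rw [profGp_a₃Player]; simp [Gp, relGp])
  · exact profGp_a₂Player (G := G) (f := f) ▸ isBarrier_update_apply hs hv' (Ne.symm hi)

lemma isBarrier_a₃ (hf : Injective f) (hv' : v' ∉ Set.range (profGp n G k f)) :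
    IsBarrier (Gp n G) (update (profGp n G k f) i v') i a₃ := by
  have hs := profGp_injective (G := G) hf
  by_cases hi : i = a₃Player k
  · subst hi
    refine isBarrier_update_of_adj hs hv' (fun h => hv' ⟨_, profGp_a₃Player.trans h⟩)
      (fun j hj h => hj (hs (h.trans profGp_a₃Player.symm))) (q := a₂Player k) (by simp)
      (by rw [profGp_a₂Player]; simp [Gp, relGp])
  · exact profGp_a₃Player (G := G) (f := f) ▸ isBarrier_update_apply hs hv' (Ne.symm hi)

lemma isBarrier_b (hf : Injective f) (hv' : v' ∉ Set.range (profGp n G k f))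
    (h : i ≠ bPlayer k ∨ 0 < k) :
    IsBarrier (Gp n G) (update (profGp n G k f) i v') i b := by
  have hs := profGp_injective (G := G) hf
  by_cases hi : i = bPlayer k
  · subst hi
    have hk := h.resolve_left (not_not.2 rfl)
    refine isBarrier_update_of_adj hs hv' (fun h => hv' ⟨_, profGp_bPlayer.trans h⟩)
      (fun j hj h => hj (hs (h.trans profGp_bPlayer.symm))) (q := Fin.castAdd 3 ⟨0, hk⟩)
      (by simp [Fin.ext_iff]; omega) (by rw [profGp_castAdd]; simp [Gp, relGp])
  · exact profGp_bPlayer (G := G) (f := f) ▸ isBarrier_update_apply hs hv' (Ne.symm hi)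

lemma isBarrier_orig (hf : Injective f) (hv' : v' ∉ Set.range (profGp n G k f))
    (hi : i ≠ bPlayer k) {w : Fin n} (hw : orig w ≠ v') :
    IsBarrier (Gp n G) (update (profGp n G k f) i v') i (orig w) := by
  have hs := profGp_injective (G := G) hf
  by_cases hp : ∃ p ≠ i, profGp n G k f p = orig w
  · obtain ⟨p, hp, hpw⟩ := hp
    exact hpw ▸ isBarrier_update_apply hs hv' hp
  · push Not at hp
    exact isBarrier_update_of_adj hs hv' hw hp (Ne.symm hi)
      (by rw [profGp_bPlayer]; simp [Gp, relGp])

lemma utility_update_le_of_mem_star₁ (hf : Injective f) (hv' : v' ∉ Set.range (profGp n G k f))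
    (h : v' ∈ star₁) :
    utility (Gp n G) (fun _ => 1) (update (profGp n G k f) i v') i ≤ n + 1 := by
  refine le_trans (utility_one_le_card_of_mem star₁ (by rwa [update_self])
    fun u hu v hadj => ?_) (by simp [card_star₁])
  rcases mem_star₁_or_eq_a₂_of_adj hu hadj with h | rfl
  exacts [Or.inl h, Or.inr (isBarrier_a₂ hf hv')]

lemma utility_update_le_of_mem_star₄ (hf : Injective f) (hv' : v' ∉ Set.range (profGp n G k f))
    (h : v' ∈ star₄) :
    utility (Gp n G) (fun _ => 1) (update (profGp n G k f) i v') i ≤ n + 1 := by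
  refine le_trans (utility_one_le_card_of_mem star₄ (by rwa [update_self])
    fun u hu v hadj => ?_) (by simp [card_star₄])
  rcases mem_star₄_or_eq_a₃_of_adj hu hadj with h | rfl
  exacts [Or.inl h, Or.inr (isBarrier_a₃ hf hv')]

lemma utility_update_le_of_inl (hf : Injective f) {x} (hv' : .inl x ∉ Set.range (profGp n G k f)) :
    utility (Gp n G) (fun _ => 1) (update (profGp n G k f) i (.inl x)) i ≤ n + 1 := by
  rcases x with j | l | l
  · fin_cases j
    · exact utility_update_le_of_mem_star₁ hf hv' (mem_star₁.2 (Or.inl rfl))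
    · exact absurd ⟨_, profGp_a₂Player⟩ hv'
    · exact absurd ⟨_, profGp_a₃Player⟩ hv'
    · exact utility_update_le_of_mem_star₄ hf hv' (mem_star₄.2 (Or.inl rfl))
  · exact utility_update_le_of_mem_star₁ hf hv' (mem_star₁.2 (Or.inr ⟨l, rfl⟩))
  · exact utility_update_le_of_mem_star₄ hf hv' (mem_star₄.2 (Or.inr ⟨l, rfl⟩))

lemma utility_update_orig_le (hf : Injective f) {u : Fin n}
    (hv' : orig u ∉ Set.range (profGp n G k f)) (hi : i ≠ bPlayer k) :
    utility (Gp n G) (fun _ => 1) (update (profGp n G k f) i (orig u)) i ≤ n + 1 := by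
  refine (utility_one_le_card_of_mem (origStar u) (by simp [mem_origStar])
    fun x hx v hadj => ?_).trans (by simp [card_origStar])
  rcases mem_origStar_or_of_adj hx hadj with h | rfl | ⟨w, hw, rfl⟩
  · exact Or.inl h
  · exact Or.inr (isBarrier_b hf hv' (Or.inl hi))
  · exact Or.inr (isBarrier_orig hf hv' hi (by simpa using hw))

lemma utility_update_le_succ (hf : Injective f) (hv' : v' ∉ Set.range (profGp n G k f))
    (hi : i ≠ bPlayer k) :
    utility (Gp n G) (fun _ => 1) (update (profGp n G k f) i v') i ≤ n + 1 := by
  have hbarrier : ∀ w, (Gp n G).Adj (orig w) v' →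
      IsBarrier (Gp n G) (update (profGp n G k f) i v') i (orig w) :=
    fun w hw => isBarrier_orig hf hv' hi hw.ne
  rcases v' with x | (u | e | x | ⟨⟩ | l)
  · exact utility_update_le_of_inl hf hv'
  · exact utility_update_orig_le hf hv' hi
  · refine (utility_one_le_one_of_forall_adj fun u hu => ?_).trans (by linarith)
    rw [update_self] at hu
    obtain ⟨w, -, rfl⟩ := eq_orig_of_adj_sub hu
    exact hbarrier w hu
  · refine (utility_one_le_one_of_forall_adj fun u hu => ?_).trans (by linarith)
    rw [update_self] at hu
    obtain rfl := eq_orig_of_adj_origLeaf hu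
    exact hbarrier _ hu
  · exact absurd ⟨_, profGp_bPlayer⟩ hv'
  · refine (utility_one_le_one_of_forall_adj fun u hu => ?_).trans (by linarith)
    rw [update_self] at hu
    rw [eq_b_of_adj_bLeaf hu]
    exact isBarrier_b hf hv' (Or.inl hi)

lemma utility_update_le_of_mem_origPart (hf : Injective f) (hv' : v' ∉ Set.range (profGp n G k f))
    (hk : 0 < k) (h : v' ∈ origPart) :
    utility (Gp n G) (fun _ => 1) (update (profGp n G k f) i v') i ≤ n + n ^ 2 := by
  refine le_trans (utility_one_le_card_of_mem origPart (by rwa [update_self])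
    fun u hu v hadj => ?_) (by exact_mod_cast card_origPart_le)
  rcases mem_origPart_or_eq_b_of_adj hu hadj with h | rfl
  exacts [Or.inl h, Or.inr (isBarrier_b hf hv' (Or.inr hk))]

lemma utility_update_bPlayer_le (hf : Injective f) (hv' : v' ∉ Set.range (profGp n G k f)) :
    utility (Gp n G) (fun _ => 1) (update (profGp n G k f) (bPlayer k) v') (bPlayer k) ≤
      utility (Gp n G) (fun _ => 1) (profGp n G k f) (bPlayer k) := by
  have hn : (0 : ℤ) ≤ n := Int.natCast_nonneg n
  have hcube : (n : ℤ) + n ^ 2 ≤ n ^ 3 + 1 := by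
    nlinarith [mul_nonneg (sq_nonneg ((n : ℤ) - 1)) (by linarith : (0 : ℤ) ≤ n + 1)]
  rcases v' with x | y
  · refine (utility_update_le_of_inl hf hv').trans (le_trans ?_
      (pow_three_succ_le_utility_bPlayer hf))
    nlinarith
  rcases Nat.eq_zero_or_pos k with rfl | hk
  · exact (utility_one_le_card_of_mem compB (by simp [inr_mem_compB])
      fun u hu v hadj => Or.inl (mem_compB_of_adj hu hadj)).trans
      (card_le_utility_one _ (finalLabel_profGp_zero_compB f))
  refine le_trans ?_ (pow_three_succ_le_utility_bPlayer hf)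
  rcases inr_mem_origPart_or_mem_starB y with h | h
  · exact (utility_update_le_of_mem_origPart hf hv' hk h).trans hcube
  rcases mem_starB.1 h with h | ⟨l, h⟩
  · exact absurd ⟨_, profGp_bPlayer.trans h.symm⟩ hv'
  refine (utility_one_le_one_of_forall_adj fun u hu => ?_).trans (by linarith [pow_nonneg hn 3])
  rw [update_self, h] at hu
  rw [eq_b_of_adj_bLeaf hu]
  exact isBarrier_b hf hv' (Or.inr hk)

end Profile

end Gp

/-- if `I` is an independent set of `G` with `|I| ≥ k`, then the
competitive diffusion game with `k+3` players on the unweighted graph `G'` has a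
pure Nash equilibrium, namely `k` players on `k` distinct vertices of `I`, one
player on `b`, and two players on `a_2` and `a_3`. -/
theorem Gp_independent_to_nash (n k : ℕ) (G : SimpleGraph (Fin n))
    [DecidableRel G.Adj] (I : Finset (Fin n))
    (hI : ∀ u ∈ I, ∀ v ∈ I, ¬ G.Adj u v) (hcard : k ≤ I.card) :
    ∃ f : Fin k → Fin n, Function.Injective f ∧ (∀ i, f i ∈ I) ∧
      isNash (Gp n G) (fun _ => (1 : ℤ)) (profGp n G k f) := by
  obtain ⟨J, hJI, hJ⟩ := exists_subset_card_eq hcard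
  let f : Fin k → Fin n := fun j => J.orderEmbOfFin hJ j
  have hf : Injective f := (J.orderEmbOfFin hJ).injective
  have hfI : ∀ j, f j ∈ I := fun j => hJI (J.orderEmbOfFin_mem hJ j)
  refine ⟨f, hf, hfI, fun i v' => ?_⟩
  by_cases hv' : v' ∈ Set.range (profGp n G k f)
  · exact utility_update_le_of_mem_range hv'
  by_cases hi : i = Gp.bPlayer k
  · subst hi
    exact Gp.utility_update_bPlayer_le hf hv'
  · exact (Gp.utility_update_le_succ hf hv' hi).trans (Gp.succ_le_utility_profGp hf hfI hI i)
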